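/- arXiv:2506.19123 — 8 statements merged into one kernel-verified Lean document; each statement's English description precedes it below -/
import Mathlib

section
/- Let T be a critical binary Bienaymé–Galton–Watson tree whose internal nodes carry i.i.d. signs, ⊕ with probability p and ⊖ with probability 1-p, independent of the tree. Let q(k) = P(LIS(T) = k), where LIS(T) is the maximal number of leaves of a positive subtree of T. Then for all k ≥ 2, q(k) = (1-p)·q(k)·∑_{i=1}^{k-1} q(i) + p·∑_{1 ≤ i < k/2} q(i)·q(k-i) + ((1-p)/2)·q(k)^2 + 1_{k even}·(p/2)·q(k/2)^2. -/
/-- Sign-decorated plane binary trees: leaves, and internal nodes carrying a sign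
(`true` = ⊕, `false` = ⊖) together with two ordered subtrees. -/
inductive STree : Type
  | leaf : STree
  | node : Bool → STree → STree → STree

namespace STree

/-- `LIS t` is the maximal number of leaves of a positive subtree of `t`
(a subtree all of whose internal nodes carry ⊕): if the root carries ⊕ the LIS values of
the two subtrees add, if it carries ⊖ one takes the maximum. -/
def LIS : STree → ℕ
  | leaf => 1
  | node true l r => LIS l + LIS r
  | node false l r => max (LIS l) (LIS r)

/-- The probability that the `p`-signed critical binary Bienaymé–Galton–Watson tree
(each vertex independently has 0 or 2 children with probability 1/2 each, and each
internal node independently carries ⊕ with probability `p` and ⊖ with probability `1-p`)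
equals a given finite sign-decorated tree. -/
noncomputable def weight (p : ℝ) : STree → ℝ
  | leaf => 1 / 2
  | node s l r => (1 / 2) * (if s then p else 1 - p) * weight p l * weight p r

end STree

/-- `q p k = P(LIS(T) = k)` for the `p`-signed critical binary
Bienaymé–Galton–Watson tree `T`. -/
noncomputable def qLIS (p : ℝ) (k : ℕ) : ℝ :=
  ∑' t : {t : STree // t.LIS = k}, STree.weight p t.1

/-!
Split `T` at its root. For `k ≥ 2` the root is not a leaf, so it has two independent
subtrees `L`, `R` and contributes a factor `1/2`. Under ⊕ the event `LIS T = k` is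
`LIS L + LIS R = k`, of probability `∑_{i + j = k} q(i) q(j)`, and folding this symmetric
sum gives the middle terms. Under ⊖ it is `max (LIS L) (LIS R) = k`, of probability
`P(LIS ≤ k)² - P(LIS ≤ k - 1)² = 2 q(k) ∑_{i < k} q(i) + q(k)²`.
-/

open Finset

theorem Finset.sum_range_succ_eq_two_nsmul_add_of_symm {M : Type*} [AddCommMonoid M]
    (g : ℕ → M) (k : ℕ) (hg : ∀ i ≤ k, g (k - i) = g i) :
    ∑ i ∈ range (k + 1), g i
      = 2 • ∑ i ∈ range ((k + 1) / 2), g i + if Even k then g (k / 2) else 0 := by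
  obtain ⟨m, rfl | rfl⟩ := Nat.even_or_odd' k
  · have hupper : ∑ i ∈ range m, g (m + (i + 1)) = ∑ i ∈ range m, g i := by
      rw [← sum_range_reflect g m]
      refine sum_congr rfl fun i hi => ?_
      have := mem_range.1 hi
      rw [← hg (m + (i + 1)) (by omega)]
      congr 1
      omega
    rw [show 2 * m + 1 = m + (m + 1) by omega, sum_range_add, sum_range_succ', hupper,
      if_pos (even_two_mul m), show (m + (m + 1)) / 2 = m by omega,
      show 2 * m / 2 = m by omega, two_nsmul, add_zero]
    abel
  · have hupper : ∑ i ∈ range (m + 1), g (m + 1 + i) = ∑ i ∈ range (m + 1), g i := by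
      rw [← sum_range_reflect g (m + 1)]
      refine sum_congr rfl fun i hi => ?_
      have := mem_range.1 hi
      rw [← hg (m + 1 + i) (by omega)]
      congr 1
      omega
    rw [show 2 * m + 1 + 1 = (m + 1) + (m + 1) by omega, sum_range_add, hupper,
      if_neg (Nat.not_even_iff_odd.2 (odd_two_mul_add_one m)),
      show (m + 1 + (m + 1)) / 2 = m + 1 by omega, two_nsmul, add_zero]

theorem Finset.sum_Icc_one_sub_one_eq_sum_range {M : Type*} [AddCommMonoid M] {g : ℕ → M}
    (h0 : g 0 = 0) (n : ℕ) : ∑ i ∈ Icc 1 (n - 1), g i = ∑ i ∈ range n, g i := by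
  rw [← sum_erase (range n) h0]
  congr 1
  ext i
  simp only [mem_Icc, mem_erase, mem_range]
  omega

theorem Finset.Nat.sum_antidiagonal_mul_eq_of_map_zero {R : Type*} [CommSemiring R] {a : ℕ → R}
    (h0 : a 0 = 0) (k : ℕ) :
    ∑ ij ∈ antidiagonal k, a ij.1 * a ij.2
      = 2 * ∑ i ∈ Icc 1 ((k - 1) / 2), a i * a (k - i)
        + if Even k then a (k / 2) ^ 2 else 0 := by
  rw [Nat.sum_antidiagonal_eq_sum_range_succ (fun i j => a i * a j),
    sum_range_succ_eq_two_nsmul_add_of_symm _ k fun i hi => by rw [Nat.sub_sub_self hi, mul_comm],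
    show (k - 1) / 2 = (k + 1) / 2 - 1 by omega,
    sum_Icc_one_sub_one_eq_sum_range (by simp [h0]), nsmul_eq_mul, Nat.cast_ofNat,
    show k - k / 2 = k / 2 + k % 2 by omega]
  split_ifs with hk
  · rw [Nat.even_iff.1 hk, add_zero, sq]
  · rfl

theorem Finset.sum_range_product_sdiff_mul {R : Type*} [CommRing R] (a : ℕ → R) (k : ℕ) :
    ∑ ij ∈ (range (k + 1) ×ˢ range (k + 1)) \ (range k ×ˢ range k), a ij.1 * a ij.2
      = 2 * a k * ∑ i ∈ range k, a i + a k ^ 2 := by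
  have hsq (n : ℕ) : ∑ ij ∈ range n ×ˢ range n, a ij.1 * a ij.2 = (∑ i ∈ range n, a i) ^ 2 := by
    rw [sq, sum_mul_sum, sum_product]
  have hsub : range k ×ˢ range k ⊆ range (k + 1) ×ˢ range (k + 1) :=
    product_subset_product (range_subset_range.2 k.le_succ) (range_subset_range.2 k.le_succ)
  rw [sum_sdiff_eq_sub hsub, hsq, hsq, sum_range_succ]
  ring

namespace STree

variable {p : ℝ}

theorem one_le_LIS : ∀ t : STree, 1 ≤ t.LIS
  | leaf => le_rfl
  | node true l _ => le_add_right (one_le_LIS l)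
  | node false l _ => le_max_of_le_left (one_le_LIS l)

theorem weight_nonneg (hp : p ∈ Set.Icc 0 1) : ∀ t : STree, 0 ≤ t.weight p
  | leaf => by norm_num [weight]
  | node s l r => by
    have hs : 0 ≤ if s then p else 1 - p := by split <;> linarith [hp.1, hp.2]
    have := weight_nonneg hp l
    have := weight_nonneg hp r
    simp only [weight]
    positivity

def height : STree → ℕ
  | leaf => 0
  | node _ l r => max l.height r.height + 1

@[simps]
def nodeEmbedding : Bool × STree × STree ↪ STree where
  toFun x := node x.1 x.2.1 x.2.2
  inj' := fun _ _ h => by simpa [Prod.ext_iff] using h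

def withHeightLE : ℕ → Finset STree
  | 0 => {leaf}
  | n + 1 => cons leaf ((univ ×ˢ withHeightLE n ×ˢ withHeightLE n).map nodeEmbedding)
      (by simp [nodeEmbedding])

theorem mem_withHeightLE : ∀ {t : STree} {n : ℕ}, t.height ≤ n → t ∈ withHeightLE n
  | leaf, 0, _ => by simp [withHeightLE]
  | leaf, _ + 1, _ => by simp [withHeightLE]
  | node _ _ _, 0, h => by simp [height] at h
  | node b l r, n + 1, h => by
    simp only [height, add_le_add_iff_right, max_le_iff] at h
    exact mem_cons_of_mem (mem_map_of_mem nodeEmbedding (a := (b, l, r))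
      (by simp [mem_withHeightLE h.1, mem_withHeightLE h.2]))

-- The total weight `s n` of the trees of height at most `n` obeys `s (n + 1) = 1/2 + s n ^ 2 / 2`,
-- so it never exceeds `1`.
theorem sum_weight_withHeightLE_le_one (hp : p ∈ Set.Icc 0 1) :
    ∀ n, ∑ t ∈ withHeightLE n, t.weight p ≤ 1
  | 0 => by norm_num [withHeightLE, weight]
  | n + 1 => by
    have hs0 : 0 ≤ ∑ t ∈ withHeightLE n, t.weight p := sum_nonneg fun t _ => weight_nonneg hp t
    have hs1 := sum_weight_withHeightLE_le_one hp n
    have hrec : ∑ t ∈ withHeightLE (n + 1), t.weight p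
        = 1 / 2 + (∑ t ∈ withHeightLE n, t.weight p) ^ 2 / 2 := by
      simp only [withHeightLE, sum_cons, sum_map, sum_product, Fintype.sum_bool,
        nodeEmbedding_apply, weight, sq, sum_mul_sum, sum_div, ← sum_add_distrib]
      refine congrArg _ (sum_congr rfl fun _ _ => sum_congr rfl fun _ _ => ?_)
      simp only [Bool.false_eq_true, if_true, if_false]
      ring
    rw [hrec]
    nlinarith

theorem summable_weight (hp : p ∈ Set.Icc 0 1) : Summable (weight p) :=
  summable_of_sum_le (weight_nonneg hp) fun _ =>
    (sum_le_sum_of_subset_of_nonneg (fun _ ht => mem_withHeightLE (le_sup ht))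
      fun t _ _ => weight_nonneg hp t).trans (sum_weight_withHeightLE_le_one hp _)

theorem summable_ite_weight (hp : p ∈ Set.Icc 0 1) (P : STree → Prop) [DecidablePred P] :
    Summable fun t => if P t then t.weight p else 0 :=
  (summable_weight hp).of_nonneg_of_le (fun t => ite_nonneg (weight_nonneg hp t) le_rfl)
    fun t => by split <;> simp [weight_nonneg hp t]

theorem tsum_eq_tsum_node_false_add_tsum_node_true {f : STree → ℝ} (hf : Summable f)
    (hleaf : f leaf = 0) :
    ∑' t, f t = ∑' x : STree × STree, f (node false x.1 x.2)
      + ∑' x : STree × STree, f (node true x.1 x.2) := by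
  have hsupport : Function.support f ⊆ Set.range nodeEmbedding := by
    rintro (_ | ⟨b, l, r⟩) ht
    · exact absurd hleaf ht
    · exact ⟨(b, l, r), rfl⟩
  have hsummable : Summable fun x => f (nodeEmbedding x) :=
    hf.comp_injective nodeEmbedding.injective
  rw [← nodeEmbedding.injective.tsum_eq hsupport, hsummable.tsum_prod, tsum_bool]
  rfl

end STree

open STree

section

variable {p : ℝ}

theorem qLIS_eq_tsum_ite (k : ℕ) :
    qLIS p k = ∑' t : STree, if t.LIS = k then t.weight p else 0 := by
  refine (_root_.tsum_subtype {t | t.LIS = k} (weight p)).trans (tsum_congr fun t => ?_)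
  simp [Set.indicator_apply]

theorem qLIS_zero : qLIS p 0 = 0 := by
  simp [qLIS_eq_tsum_ite, Nat.one_le_iff_ne_zero.1 (one_le_LIS _)]

theorem tsum_ite_LIS_pair_mem (hp : p ∈ Set.Icc 0 1) (S : Finset (ℕ × ℕ)) :
    ∑' x : STree × STree,
        (if (x.1.LIS, x.2.LIS) ∈ S then x.1.weight p * x.2.weight p else 0)
      = ∑ ij ∈ S, qLIS p ij.1 * qLIS p ij.2 := by
  set f : ℕ → STree → ℝ := fun i t => if t.LIS = i then t.weight p else 0
  have hf_nonneg (i : ℕ) : 0 ≤ f i := fun t => ite_nonneg (weight_nonneg hp t) le_rfl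
  have hf_summable (i : ℕ) : Summable (f i) := summable_ite_weight hp _
  have hpair_summable (ij : ℕ × ℕ) : Summable fun x : STree × STree => f ij.1 x.1 * f ij.2 x.2 :=
    (hf_summable _).mul_of_nonneg (hf_summable _) (hf_nonneg _) (hf_nonneg _)
  have hsplit (x : STree × STree) :
      (if (x.1.LIS, x.2.LIS) ∈ S then x.1.weight p * x.2.weight p else 0)
        = ∑ ij ∈ S, f ij.1 x.1 * f ij.2 x.2 := by
    rw [← sum_ite_eq S (x.1.LIS, x.2.LIS) fun _ => x.1.weight p * x.2.weight p]
    exact sum_congr rfl fun ij _ => by simp only [f, ite_zero_mul_ite_zero, Prod.ext_iff]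
  rw [tsum_congr hsplit, Summable.tsum_finsetSum fun ij _ => hpair_summable ij]
  refine sum_congr rfl fun ij _ => ?_
  rw [qLIS_eq_tsum_ite, qLIS_eq_tsum_ite,
    (hf_summable _).tsum_mul_tsum (hf_summable _) (hpair_summable ij)]

theorem qLIS_eq_of_ne_one (hp : p ∈ Set.Icc 0 1) {k : ℕ} (hk : k ≠ 1) :
    qLIS p k
      = (1 - p) / 2 * ∑ ij ∈ (range (k + 1) ×ˢ range (k + 1)) \ (range k ×ˢ range k),
          qLIS p ij.1 * qLIS p ij.2
        + p / 2 * ∑ ij ∈ antidiagonal k, qLIS p ij.1 * qLIS p ij.2 := by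
  rw [qLIS_eq_tsum_ite, tsum_eq_tsum_node_false_add_tsum_node_true (summable_ite_weight hp _)
      (if_neg (Ne.symm hk)), ← tsum_ite_LIS_pair_mem hp, ← tsum_ite_LIS_pair_mem hp,
    ← tsum_mul_left, ← tsum_mul_left]
  congr 1 <;> refine tsum_congr fun x => ?_ <;>
    simp only [LIS, weight, mem_sdiff, mem_product, mem_range, HasAntidiagonal.mem_antidiagonal,
      Bool.false_eq_true, if_true, if_false] <;>
    split_ifs <;> first | omega | ring

end

/-- Recursive relation for the sequence `q(k) = P(LIS(T) = k)`: for all `k ≥ 2`,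
`q(k) = (1-p)·q(k)·∑_{i=1}^{k-1} q(i) + p·∑_{1 ≤ i < k/2} q(i)·q(k-i)
 + ((1-p)/2)·q(k)² + 1_{k even}·(p/2)·q(k/2)²`. -/
theorem qLIS_recursion (p : ℝ) (hp : p ∈ Set.Ioo (0 : ℝ) 1) (k : ℕ) (hk : 2 ≤ k) :
    qLIS p k =
      (1 - p) * qLIS p k * ∑ i ∈ Finset.Icc 1 (k - 1), qLIS p i
      + p * ∑ i ∈ Finset.Icc 1 ((k - 1) / 2), qLIS p i * qLIS p (k - i)
      + ((1 - p) / 2) * (qLIS p k) ^ 2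
      + (if Even k then (p / 2) * (qLIS p (k / 2)) ^ 2 else 0) := by
  conv_lhs =>
    rw [qLIS_eq_of_ne_one (Set.Ioo_subset_Icc_self hp) (by omega), sum_range_product_sdiff_mul,
      Nat.sum_antidiagonal_mul_eq_of_map_zero qLIS_zero,
      ← sum_Icc_one_sub_one_eq_sum_range qLIS_zero]
  split_ifs <;> ring
end

section
/- The function f(γ) = 4^{γ-1}·√π·Γ(2-γ)/Γ(3/2-γ) is strictly decreasing on the interval (3/2, 2). -/
open Real

/-- Gamma is nonzero on (-1,0). -/
lemma gamma_ne_zero_neg {s : ℝ} (h1 : -1 < s) (h2 : s < 0) : Real.Gamma s ≠ 0 := by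
  apply Real.Gamma_ne_zero
  intro m
  match m with
  | 0 => intro h; simp at h; linarith
  | (n+1) =>
    intro h
    have hn : (0:ℝ) ≤ (n:ℝ) := Nat.cast_nonneg n
    rw [h] at h1; push_cast at h1; linarith

/-- Key identity on the interval. -/
lemma f_eq {γ : ℝ} (h1 : 3/2 < γ) (h2 : γ < 2) :
    (4 : ℝ) ^ (γ - 1) * Real.sqrt Real.pi * Real.Gamma (2 - γ) / Real.Gamma (3 / 2 - γ)
      = (3 - 2*γ) * (Real.Gamma (2 - γ))^2 / Real.Gamma (4 - 2*γ) := by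
  have hdup := Real.Gamma_mul_Gamma_add_half (3/2 - γ)
  have he : (3/2 - γ) + 1/2 = 2 - γ := by ring
  have he2 : 2 * (3/2 - γ) = 3 - 2*γ := by ring
  rw [he, he2] at hdup
  have h4 : (4:ℝ) = (2:ℝ)^(2:ℝ) := by
    rw [show (2:ℝ) = ((2:ℕ):ℝ) from by norm_num, Real.rpow_natCast]; norm_num
  have hpow : (2 : ℝ) ^ (1 - (3 - 2*γ)) = (4:ℝ) ^ (γ - 1) := by
    rw [h4, ← Real.rpow_mul (by norm_num : (0:ℝ) ≤ 2)]
    congr 1; ring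
  rw [hpow] at hdup
  have hne1 : Real.Gamma (3/2 - γ) ≠ 0 := gamma_ne_zero_neg (by linarith) (by linarith)
  have hne2 : Real.Gamma (3 - 2*γ) ≠ 0 := gamma_ne_zero_neg (by linarith) (by linarith)
  have hadd : Real.Gamma (4 - 2*γ) = (3 - 2*γ) * Real.Gamma (3 - 2*γ) := by
    rw [show (4 - 2*γ) = (3 - 2*γ) + 1 by ring, Real.Gamma_add_one (by intro h; nlinarith)]
  have hne3 : Real.Gamma (4 - 2*γ) ≠ 0 := by
    rw [hadd]; exact mul_ne_zero (by intro h; nlinarith) hne2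
  have h32 : (3:ℝ) - 2*γ ≠ 0 := by intro h; nlinarith
  rw [hadd, div_eq_div_iff hne1 (mul_ne_zero h32 hne2)]
  linear_combination (2*γ - 3) * Real.Gamma (2 - γ) * hdup

/-- `Γ(b)²/Γ(2b)` is antitone: for `0 < a < b`, `Γ(b)²/Γ(2b) ≤ Γ(a)²/Γ(2a)`. -/
lemma beta_anti {a b : ℝ} (ha : 0 < a) (hab : a < b) :
    (Real.Gamma b)^2 / Real.Gamma (2*b) ≤ (Real.Gamma a)^2 / Real.Gamma (2*a) := by
  have hb : 0 < b := ha.trans hab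
  set L : ℝ → ℝ := Real.log ∘ Real.Gamma with hL
  have hconv := Real.convexOn_log_Gamma
  have hmem : ∀ x : ℝ, 0 < x → x ∈ Set.Ioi (0:ℝ) := fun x hx => hx
  -- slope(a,b) ≤ slope(a,2b)
  have s1 : (L b - L a) / (b - a) ≤ (L (2*b) - L a) / (2*b - a) :=
    hconv.secant_mono (hmem a ha) (hmem b hb) (hmem _ (by linarith))
      (by intro h; exact absurd h (ne_of_gt hab)) (by intro h; nlinarith) (by linarith)
  -- slope(2b,a) ≤ slope(2b,2a)
  have s2 : (L a - L (2*b)) / (a - 2*b) ≤ (L (2*a) - L (2*b)) / (2*a - 2*b) :=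
    hconv.secant_mono (hmem _ (by linarith)) (hmem a ha) (hmem _ (by linarith))
      (by intro h; nlinarith) (by intro h; nlinarith) (by linarith)
  have e1 : (L a - L (2*b)) / (a - 2*b) = (L (2*b) - L a) / (2*b - a) := by
    rw [← neg_div_neg_eq]; ring_nf
  have e2 : (L (2*a) - L (2*b)) / (2*a - 2*b) = (L (2*b) - L (2*a)) / (2*b - 2*a) := by
    rw [← neg_div_neg_eq]; ring_nf
  rw [e1, e2] at s2
  have key : 2 * (L b - L a) ≤ L (2*b) - L (2*a) := by
    have h1 : (L b - L a) / (b - a) ≤ (L (2*b) - L (2*a)) / (2*b - 2*a) := s1.trans s2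
    have hba : 0 < b - a := by linarith
    rw [div_le_div_iff₀ hba (by linarith)] at h1
    nlinarith
  -- exponentiate
  have hga : 0 < Real.Gamma a := Real.Gamma_pos_of_pos ha
  have hgb : 0 < Real.Gamma b := Real.Gamma_pos_of_pos hb
  have hg2a : 0 < Real.Gamma (2*a) := Real.Gamma_pos_of_pos (by linarith)
  have hg2b : 0 < Real.Gamma (2*b) := Real.Gamma_pos_of_pos (by linarith)
  have hlog : Real.log ((Real.Gamma b)^2 / Real.Gamma (2*b))
      ≤ Real.log ((Real.Gamma a)^2 / Real.Gamma (2*a)) := by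
    rw [Real.log_div (by positivity) (ne_of_gt hg2b),
        Real.log_div (by positivity) (ne_of_gt hg2a),
        Real.log_pow, Real.log_pow]
    have : L a = Real.log (Real.Gamma a) := rfl
    simp only [hL, Function.comp] at key
    push_cast
    linarith
  have := Real.exp_le_exp.mpr hlog
  rwa [Real.exp_log (by positivity), Real.exp_log (by positivity)] at this

/-- The function `f(γ) = 4^{γ-1}·√π·Γ(2-γ)/Γ(3/2-γ)` is strictly decreasing on `(3/2, 2)`. -/
theorem f_strictAntiOn :
    StrictAntiOn
      (fun γ : ℝ => (4 : ℝ) ^ (γ - 1) * Real.sqrt Real.pi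
        * Real.Gamma (2 - γ) / Real.Gamma (3 / 2 - γ))
      (Set.Ioo (3 / 2 : ℝ) 2) := by
  intro γ₁ h₁ γ₂ h₂ hlt
  obtain ⟨h₁l, h₁r⟩ := h₁
  obtain ⟨h₂l, h₂r⟩ := h₂
  simp only
  rw [f_eq h₁l h₁r, f_eq h₂l h₂r]
  set X₁ := (Real.Gamma (2 - γ₁))^2 / Real.Gamma (4 - 2*γ₁) with hX1
  set X₂ := (Real.Gamma (2 - γ₂))^2 / Real.Gamma (4 - 2*γ₂) with hX2
  have hg1 : 0 < Real.Gamma (2 - γ₁) := Real.Gamma_pos_of_pos (by linarith)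
  have hg2 : 0 < Real.Gamma (2 - γ₂) := Real.Gamma_pos_of_pos (by linarith)
  have hX1pos : 0 < X₁ := div_pos (by positivity) (Real.Gamma_pos_of_pos (by linarith))
  have hX2pos : 0 < X₂ := div_pos (by positivity) (Real.Gamma_pos_of_pos (by linarith))
  have hmono : X₁ ≤ X₂ := by
    have := beta_anti (a := 2 - γ₂) (b := 2 - γ₁) (by linarith) (by linarith)
    rw [show 2*(2-γ₁) = 4 - 2*γ₁ by ring, show 2*(2-γ₂) = 4 - 2*γ₂ by ring] at this
    exact this
  show (3 - 2*γ₂) * (Real.Gamma (2 - γ₂))^2 / Real.Gamma (4 - 2*γ₂)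
      < (3 - 2*γ₁) * (Real.Gamma (2 - γ₁))^2 / Real.Gamma (4 - 2*γ₁)
  have e1 : (3 - 2*γ₁) * (Real.Gamma (2 - γ₁))^2 / Real.Gamma (4 - 2*γ₁) = (3 - 2*γ₁) * X₁ := by
    rw [hX1]; ring
  have e2 : (3 - 2*γ₂) * (Real.Gamma (2 - γ₂))^2 / Real.Gamma (4 - 2*γ₂) = (3 - 2*γ₂) * X₂ := by
    rw [hX2]; ring
  rw [e1, e2]
  nlinarith
end

section
/- For every x ∈ (3/2, 2), the identity 4^{x-1}·√π·Γ(2-x)/Γ(3/2-x) = 2^{2x-1} - x·∫_0^{1/2} t^{1-x}(1-t)^{-1-x} dt holds. -/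
open MeasureTheory Set Real

/-! `t ↦ t ^ (2 - x) * (1 - t) ^ (-x) * (3 - 2 t)` is an antiderivative on `(0, 1)` of
`x t ^ (1 - x) (1 - t) ^ (-1 - x) + 2 (3 - 2x) t ^ (1 - x) (1 - t) ^ (1 - x)`: it is the combination
of the two integration-by-parts relations between incomplete beta functions in which
`B_{1/2}(2 - x, 1 - x)` cancels. Evaluating it at `1/2` gives
`2 ^ (2x - 1) - x B_{1/2}(2 - x, -x) = 2 (3 - 2x) B_{1/2}(2 - x, 2 - x) = (3 - 2x) B(2 - x, 2 - x)`,
the last step by the symmetry `t ↔ 1 - t` of the integrand, and Legendre's duplication formula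
turns `(3 - 2x) Γ(2 - x)² / Γ(4 - 2x)` into the left-hand side. -/

lemma intervalIntegrable_rpow_mul_one_sub_rpow {r : ℝ} (hr : -1 < r) (s : ℝ) {b : ℝ}
    (hb : b < 1) : IntervalIntegrable (fun t : ℝ => t ^ r * (1 - t) ^ s) volume 0 b := by
  refine (intervalIntegral.intervalIntegrable_rpow' hr).mul_continuousOn fun t ht => ?_
  have ht1 : t < 1 := by
    rcases le_total 0 b with h | h
    · rw [uIcc_of_le h] at ht; linarith [ht.2]
    · rw [uIcc_of_ge h] at ht; linarith [ht.2]
  exact ((continuous_const.sub continuous_id).continuousAt.rpow_const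
    (Or.inl (sub_ne_zero.mpr ht1.ne'))).continuousWithinAt

lemma integral_rpow_mul_one_sub_rpow_eq_Gamma_mul_Gamma_div {a b : ℝ} (ha : 0 < a)
    (hb : 0 < b) :
    ∫ t in (0 : ℝ)..1, t ^ (a - 1) * (1 - t) ^ (b - 1) = Gamma a * Gamma b / Gamma (a + b) := by
  have hβ := Complex.Gamma_mul_Gamma_eq_betaIntegral (s := a) (t := b)
    (by simpa using ha) (by simpa using hb)
  have hofReal : Complex.betaIntegral a b
      = ((∫ t in (0 : ℝ)..1, t ^ (a - 1) * (1 - t) ^ (b - 1) : ℝ) : ℂ) := by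
    rw [Complex.betaIntegral, ← intervalIntegral.integral_ofReal]
    refine intervalIntegral.integral_congr fun t ht => ?_
    rw [uIcc_of_le zero_le_one] at ht
    simp only [Complex.ofReal_mul, Complex.ofReal_cpow ht.1,
      Complex.ofReal_cpow (sub_nonneg.mpr ht.2), Complex.ofReal_sub, Complex.ofReal_one]
  rw [hofReal, ← Complex.ofReal_add, Complex.Gamma_ofReal, Complex.Gamma_ofReal,
    Complex.Gamma_ofReal] at hβ
  rw [eq_div_iff (Gamma_pos_of_pos (add_pos ha hb)).ne']
  have hβ' : Gamma a * Gamma b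
      = Gamma (a + b) * ∫ t in (0 : ℝ)..1, t ^ (a - 1) * (1 - t) ^ (b - 1) := by
    exact_mod_cast hβ
  rw [hβ', mul_comm]

lemma integral_zero_one_eq_two_mul_integral_zero_half {f : ℝ → ℝ}
    (hf : ∀ t, f (1 - t) = f t) (hint : IntervalIntegrable f volume 0 (1 / 2)) :
    ∫ t in (0 : ℝ)..1, f t = 2 * ∫ t in (0 : ℝ)..(1 / 2), f t := by
  have hreflect : ∫ t in (1 / 2 : ℝ)..1, f t = ∫ t in (0 : ℝ)..(1 / 2), f t := by
    have h := intervalIntegral.integral_comp_sub_left f (a := 0) (b := 1 / 2) 1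
    rw [sub_zero, show (1 : ℝ) - 1 / 2 = 1 / 2 by norm_num] at h
    simpa only [hf] using h.symm
  have hint' : IntervalIntegrable f volume (1 / 2) 1 := by
    have h := (hint.comp_sub_left 1).symm
    rw [sub_zero, show (1 : ℝ) - 1 / 2 = 1 / 2 by norm_num] at h
    simpa only [hf] using h
  rw [← intervalIntegral.integral_add_adjacent_intervals hint hint', hreflect, two_mul]

lemma integral_rpow_mul_one_sub_rpow_self_zero_half {a : ℝ} (ha : 0 < a) :
    ∫ t in (0 : ℝ)..(1 / 2), t ^ (a - 1) * (1 - t) ^ (a - 1)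
      = Gamma a ^ 2 / Gamma (2 * a) / 2 := by
  have hsymm : ∀ t : ℝ,
      (1 - t) ^ (a - 1) * (1 - (1 - t)) ^ (a - 1) = t ^ (a - 1) * (1 - t) ^ (a - 1) :=
    fun t => by rw [sub_sub_cancel, mul_comm]
  have h := integral_zero_one_eq_two_mul_integral_zero_half
    (f := fun t => t ^ (a - 1) * (1 - t) ^ (a - 1)) hsymm
    (intervalIntegrable_rpow_mul_one_sub_rpow (by linarith) _ one_half_lt_one)
  rw [integral_rpow_mul_one_sub_rpow_eq_Gamma_mul_Gamma_div ha ha, ← two_mul, ← sq] at h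
  linarith

lemma hasDerivAt_rpow_mul_one_sub_rpow_mul_three_sub (x : ℝ) {t : ℝ} (ht0 : 0 < t)
    (ht1 : t < 1) :
    HasDerivAt (fun t : ℝ => t ^ (2 - x) * (1 - t) ^ (-x) * (3 - 2 * t))
      (x * (t ^ (1 - x) * (1 - t) ^ (-1 - x))
        + (6 - 4 * x) * (t ^ (1 - x) * (1 - t) ^ (1 - x))) t := by
  have hs : 1 - t ≠ 0 := sub_ne_zero.mpr ht1.ne'
  have hpow : HasDerivAt (fun t : ℝ => t ^ (2 - x)) ((2 - x) * t ^ (2 - x - 1)) t :=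
    hasDerivAt_rpow_const (Or.inl ht0.ne')
  have hpow' : HasDerivAt (fun t : ℝ => (1 - t) ^ (-x)) (-x * (1 - t) ^ (-x - 1) * (-1)) t :=
    (hasDerivAt_rpow_const (Or.inl hs)).comp t ((hasDerivAt_id t).const_sub 1)
  have hlin : HasDerivAt (fun t : ℝ => 3 - 2 * t) (-2) t := by
    simpa using ((hasDerivAt_id t).const_mul 2).const_sub 3
  have e₁ : t ^ (2 - x) = t ^ (1 - x) * t := by
    rw [← rpow_add_one ht0.ne']; ring_nf
  have e₂ : (1 - t) ^ (-x) = (1 - t) ^ (-1 - x) * (1 - t) := by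
    rw [← rpow_add_one hs]; ring_nf
  have e₃ : (1 - t) ^ (1 - x) = (1 - t) ^ (-1 - x) * (1 - t) ^ 2 := by
    rw [sq, ← mul_assoc, ← rpow_add_one hs, ← rpow_add_one hs]; ring_nf
  refine ((hpow.mul hpow').mul hlin).congr_deriv ?_
  rw [Pi.mul_apply, show 2 - x - 1 = 1 - x by ring, show -x - 1 = -1 - x by ring, e₁, e₂, e₃]
  ring

lemma mul_integral_add_mul_integral_eq_two_rpow {x : ℝ} (hx : x < 2) :
    x * (∫ t in (0 : ℝ)..(1 / 2), t ^ (1 - x) * (1 - t) ^ (-1 - x))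
      + (6 - 4 * x) * ∫ t in (0 : ℝ)..(1 / 2), t ^ (1 - x) * (1 - t) ^ (1 - x)
      = 2 ^ (2 * x - 1) := by
  have hr : -1 < 1 - x := by linarith
  have hA := intervalIntegrable_rpow_mul_one_sub_rpow hr (-1 - x) one_half_lt_one
  have hC := intervalIntegrable_rpow_mul_one_sub_rpow hr (1 - x) one_half_lt_one
  have hcont : ContinuousOn (fun t : ℝ => t ^ (2 - x) * (1 - t) ^ (-x) * (3 - 2 * t))
      (Icc 0 (1 / 2)) := by
    refine fun t ht => (ContinuousAt.continuousWithinAt ?_)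
    have hs : 1 - t ≠ 0 := by linarith [ht.2]
    fun_prop (disch := first | exact Or.inr (by linarith) | exact Or.inl hs)
  have hftc := intervalIntegral.integral_eq_sub_of_hasDerivAt_of_le (by norm_num) hcont
    (fun t ht => hasDerivAt_rpow_mul_one_sub_rpow_mul_three_sub x ht.1 (by linarith [ht.2]))
    ((hA.const_mul x).add (hC.const_mul (6 - 4 * x)))
  rw [intervalIntegral.integral_add (hA.const_mul x) (hC.const_mul _),
    intervalIntegral.integral_const_mul, intervalIntegral.integral_const_mul] at hftc
  rw [hftc, zero_rpow (by linarith), zero_mul, zero_mul, sub_zero]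
  have hhalf : ∀ a : ℝ, (1 / 2 : ℝ) ^ a = 2 ^ (-a) := fun a => by
    rw [one_div, inv_rpow zero_le_two, rpow_neg zero_le_two]
  rw [show (1 : ℝ) - 1 / 2 = 1 / 2 by norm_num, hhalf, hhalf, ← rpow_add two_pos,
    show (3 : ℝ) - 2 * (1 / 2) = 2 by norm_num, ← rpow_add_one two_ne_zero]
  ring_nf

lemma mul_Gamma_sq_div_Gamma_two_mul {a : ℝ} (ha : 0 < a) :
    (2 * a - 1) * (Gamma a ^ 2 / Gamma (2 * a))
      = 4 ^ (1 - a) * √π * Gamma a / Gamma (a - 1 / 2) := by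
  -- at `a = 1/2` both sides vanish, the right one through the junk value `Gamma 0 = 0`
  rcases eq_or_ne (a - 1 / 2) 0 with h | h
  · rw [show 2 * a - 1 = 0 by linarith, h, Gamma_zero, div_zero, zero_mul]
  have hrec : Gamma (a + 1 / 2) = (a - 1 / 2) * Gamma (a - 1 / 2) := by
    rw [← Gamma_add_one h]; ring_nf
  have hΓ : Gamma (a - 1 / 2) ≠ 0 := by
    have := Gamma_pos_of_pos (by linarith : 0 < a + 1 / 2)
    rw [hrec] at this
    exact right_ne_zero_of_mul this.ne'
  have hΓ2 : Gamma (2 * a) ≠ 0 := (Gamma_pos_of_pos (by linarith)).ne'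
  have h4 : (4 : ℝ) ^ (1 - a) = 2 * 2 ^ (1 - 2 * a) := by
    rw [show (4 : ℝ) = 2 ^ (2 : ℝ) by norm_num, ← rpow_mul zero_le_two,
      show 2 * (1 - a) = 1 - 2 * a + 1 by ring, rpow_add_one two_ne_zero, mul_comm]
  have hdup := Gamma_mul_Gamma_add_half a
  rw [hrec] at hdup
  rw [h4, mul_div_assoc', div_eq_div_iff hΓ2 hΓ]
  linear_combination (2 * Gamma a) * hdup

/-- For every `x ∈ (3/2, 2)`,
`4^{x-1}·√π·Γ(2-x)/Γ(3/2-x) = 2^{2x-1} - x·∫_0^{1/2} t^{1-x}(1-t)^{-1-x} dt`. -/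
theorem gamma_incomplete_beta_identity (x : ℝ) (hx : x ∈ Set.Ioo (3 / 2 : ℝ) 2) :
    (4 : ℝ) ^ (x - 1) * Real.sqrt Real.pi * Real.Gamma (2 - x) / Real.Gamma (3 / 2 - x)
      = (2 : ℝ) ^ (2 * x - 1)
        - x * ∫ t in (0 : ℝ)..(1 / 2 : ℝ), t ^ (1 - x) * (1 - t) ^ (-1 - x) := by
  have ha : 0 < 2 - x := by linarith [hx.2]
  have hhalf := integral_rpow_mul_one_sub_rpow_self_zero_half ha
  have hdup := mul_Gamma_sq_div_Gamma_two_mul ha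
  rw [show 2 - x - 1 = 1 - x by ring] at hhalf
  rw [show 2 * (2 - x) - 1 = 3 - 2 * x by ring, show 1 - (2 - x) = x - 1 by ring,
    show 2 - x - 1 / 2 = 3 / 2 - x by ring] at hdup
  rw [← hdup, ← mul_integral_add_mul_integral_eq_two_rpow hx.2, hhalf]
  ring
end

section
/- For each p ∈ (0,1), there is a unique α ∈ (1/2, 1) satisfying (1/(4^{1/(2α)}·√π)) · Γ(1/2 - 1/(2α)) / Γ(1 - 1/(2α)) = p/(p-1). -/
/-!
Substituting `x = 1 / (2α)`, an involution of `(1/2, 1)`, the reflection formula turns the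
left-hand side into `-tan (π (1 - x)) · 4⁻ˣ Γ(x) / Γ(x + 1/2) / √π`. On `(1/2, 1)` the three
factors `tan (π (1 - x))`, `4⁻ˣ` and `Γ(x) / Γ(x + 1/2)` are positive and decreasing, the last by
log-convexity of `Γ`. Their product is continuous, tends to `+∞` at `1/2` and to `0` at `1`, so it
takes the positive value `-√π p / (p - 1)` exactly once.
-/

open Real Set Filter Topology

theorem ConvexOn.map_add_sub_map_le {s : Set ℝ} {f : ℝ → ℝ} (hf : ConvexOn ℝ s f) {x y d : ℝ}
    (hx : x ∈ s) (hyd : y + d ∈ s) (hxy : x ≤ y) (hd : 0 ≤ d) :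
    f (x + d) - f x ≤ f (y + d) - f y := by
  rcases hxy.eq_or_lt with rfl | hxy
  · rfl
  have hlen : 0 < y + d - x := by linarith
  -- `x + d` and `y` are convex combinations of `x`, `y + d`, weights `(1 - t, t)` and `(t, 1 - t)`
  set t := d / (y + d - x)
  have ht : t * (y + d - x) = d := div_mul_cancel₀ _ hlen.ne'
  have ht0 : 0 ≤ t := div_nonneg hd hlen.le
  have ht1 : t ≤ 1 := (div_le_one hlen).2 (by linarith)
  have h₁ := hf.2 hx hyd (sub_nonneg.2 ht1) ht0 (sub_add_cancel 1 t)
  have h₂ := hf.2 hx hyd ht0 (sub_nonneg.2 ht1) (add_sub_cancel t 1)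
  simp only [smul_eq_mul] at h₁ h₂
  rw [show (1 - t) * x + t * (y + d) = x + d by linear_combination ht] at h₁
  rw [show t * x + (1 - t) * (y + d) = y by linear_combination -ht] at h₂
  linarith

theorem Real.antitoneOn_Gamma_div_Gamma_add {d : ℝ} (hd : 0 ≤ d) :
    AntitoneOn (fun x ↦ Gamma x / Gamma (x + d)) (Ioi 0) := by
  intro x (hx : 0 < x) y (hy : 0 < y) hxy
  have hlog : log (Gamma (x + d)) + log (Gamma y) ≤ log (Gamma x) + log (Gamma (y + d)) := by
    have hinc := convexOn_log_Gamma.map_add_sub_map_le hx (show 0 < y + d by linarith) hxy hd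
    simp only [Function.comp] at hinc
    linarith
  rw [← log_mul (Gamma_pos_of_pos (by linarith)).ne' (Gamma_pos_of_pos hy).ne',
    ← log_mul (Gamma_pos_of_pos hx).ne' (Gamma_pos_of_pos (by linarith)).ne',
    log_le_log_iff (by positivity) (by positivity)] at hlog
  rw [div_le_div_iff₀ (Gamma_pos_of_pos (by linarith)) (Gamma_pos_of_pos (by linarith))]
  linarith

theorem Real.Gamma_one_half_sub_div_Gamma_one_sub {x : ℝ} (hsin : sin (π * x) ≠ 0)
    (hcos : cos (π * x) ≠ 0) :
    Gamma (1 / 2 - x) / Gamma (1 - x) = tan (π * x) * Gamma x / Gamma (x + 1 / 2) := by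
  have h₁ : Gamma (1 / 2 - x) * Gamma (x + 1 / 2) = π / cos (π * x) := by
    rw [← sin_pi_div_two_sub, show x + 1 / 2 = 1 - (1 / 2 - x) by ring, Gamma_mul_Gamma_one_sub]
    ring_nf
  have h₂ : Gamma x * Gamma (1 - x) = π / sin (π * x) := Gamma_mul_Gamma_one_sub x
  have h₂' : Gamma x * Gamma (1 - x) * sin (π * x) = π := by rw [h₂, div_mul_cancel₀ _ hsin]
  have hhalf : Gamma (x + 1 / 2) ≠ 0 := right_ne_zero_of_mul (h₁ ▸ div_ne_zero pi_ne_zero hcos)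
  have hone : Gamma (1 - x) ≠ 0 := right_ne_zero_of_mul (h₂ ▸ div_ne_zero pi_ne_zero hsin)
  rw [eq_div_iff hhalf, div_mul_eq_mul_div, h₁, tan_eq_sin_div_cos]
  field_simp
  linear_combination -h₂'

noncomputable def scaledGammaRatio (x : ℝ) : ℝ := (4 : ℝ) ^ (-x) * Gamma x / Gamma (x + 1 / 2)

theorem scaledGammaRatio_pos {x : ℝ} (hx : 0 < x) : 0 < scaledGammaRatio x := by
  unfold scaledGammaRatio
  positivity

theorem strictAntiOn_scaledGammaRatio : StrictAntiOn scaledGammaRatio (Ioi 0) := by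
  intro x (hx : 0 < x) y (hy : 0 < y) hxy
  have hpow : (4 : ℝ) ^ (-y) < 4 ^ (-x) := (rpow_lt_rpow_left_iff (by norm_num)).2 (neg_lt_neg hxy)
  have hΓ := antitoneOn_Gamma_div_Gamma_add (by norm_num : (0 : ℝ) ≤ 1 / 2) hx hy hxy.le
  simp only [scaledGammaRatio, mul_div_assoc]
  exact mul_lt_mul hpow hΓ (by positivity) (by positivity)

theorem continuousOn_scaledGammaRatio : ContinuousOn scaledGammaRatio (Ioi 0) := by
  have hΓ : ContinuousOn Gamma (Ioi 0) := differentiableOn_Gamma_Ioi.continuousOn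
  have hpow : Continuous fun x : ℝ ↦ (4 : ℝ) ^ (-x) :=
    continuous_const.rpow continuous_neg fun _ ↦ Or.inl four_ne_zero
  refine ((hpow.continuousOn.mul hΓ).div
    (hΓ.comp (by fun_prop) fun x (hx : 0 < x) ↦ ?_) fun x (hx : 0 < x) ↦ ?_)
  · show 0 < x + 1 / 2
    linarith
  · exact (Gamma_pos_of_pos (by linarith)).ne'

noncomputable def tanScaledGammaRatio (x : ℝ) : ℝ := tan (π * (1 - x)) * scaledGammaRatio x

theorem pi_mul_one_sub_mem_Ioo {x : ℝ} (hx : x ∈ Ioo (1 / 2) 1) : π * (1 - x) ∈ Ioo 0 (π / 2) := by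
  obtain ⟨hx₁, hx₂⟩ := hx
  constructor <;> nlinarith [pi_pos]

theorem strictAntiOn_tanScaledGammaRatio : StrictAntiOn tanScaledGammaRatio (Ioo (1 / 2) 1) := by
  intro x hx y hy hxy
  obtain ⟨hy₀, hy₁⟩ := pi_mul_one_sub_mem_Ioo hy
  obtain ⟨hx₀, hx₁⟩ := pi_mul_one_sub_mem_Ioo hx
  have htan : tan (π * (1 - y)) < tan (π * (1 - x)) :=
    strictMonoOn_tan ⟨by linarith [pi_pos], hy₁⟩ ⟨by linarith [pi_pos], hx₁⟩
      (by nlinarith [pi_pos])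
  have hR := strictAntiOn_scaledGammaRatio (show 0 < x by linarith [hx.1])
    (show 0 < y by linarith [hy.1]) hxy
  exact mul_lt_mul'' htan hR (tan_pos_of_pos_of_lt_pi_div_two hy₀ hy₁).le
    (scaledGammaRatio_pos (by linarith [hy.1])).le

theorem continuousOn_tanScaledGammaRatio : ContinuousOn tanScaledGammaRatio (Ioo (1 / 2) 1) := by
  refine ContinuousOn.mul (continuousOn_tan.comp (by fun_prop) fun x hx ↦ ?_)
    (continuousOn_scaledGammaRatio.mono fun x hx ↦ (by linarith [hx.1] : (0 : ℝ) < x))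
  exact (cos_pos_of_mem_Ioo ⟨by linarith [(pi_mul_one_sub_mem_Ioo hx).1, pi_pos],
    (pi_mul_one_sub_mem_Ioo hx).2⟩).ne'

theorem tendsto_tanScaledGammaRatio_one : Tendsto tanScaledGammaRatio (𝓝[<] 1) (𝓝 0) := by
  have hR : ContinuousAt scaledGammaRatio 1 :=
    continuousOn_scaledGammaRatio.continuousAt (Ioi_mem_nhds one_pos)
  have htan : ContinuousAt (fun x : ℝ ↦ tan (π * (1 - x))) 1 :=
    (continuousAt_tan.2 (by simp)).comp (by fun_prop)
  have h₀ : tanScaledGammaRatio 1 = 0 := by simp [tanScaledGammaRatio]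
  have hcont : ContinuousAt tanScaledGammaRatio 1 := htan.mul hR
  exact h₀ ▸ hcont.tendsto.mono_left nhdsWithin_le_nhds

theorem tendsto_tanScaledGammaRatio_one_half :
    Tendsto tanScaledGammaRatio (𝓝[>] (1 / 2)) atTop := by
  have hR : Tendsto scaledGammaRatio (𝓝[>] (1 / 2)) (𝓝 (scaledGammaRatio (1 / 2))) :=
    (continuousOn_scaledGammaRatio.continuousAt (Ioi_mem_nhds one_half_pos)).tendsto.mono_left
      nhdsWithin_le_nhds
  have harg : Tendsto (fun x : ℝ ↦ π * (1 - x)) (𝓝[>] (1 / 2)) (𝓝[<] (π / 2)) := by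
    refine tendsto_nhdsWithin_of_tendsto_nhds_of_eventually_within _ ?_ ?_
    · have hcont : Continuous fun x : ℝ ↦ π * (1 - x) := by fun_prop
      convert (hcont.tendsto (1 / 2)).mono_left nhdsWithin_le_nhds using 2
      ring
    · filter_upwards [self_mem_nhdsWithin] with x (hx : 1 / 2 < x)
      show π * (1 - x) < π / 2
      nlinarith [pi_pos]
  exact (tendsto_tan_pi_div_two.comp harg).atTop_mul_pos (scaledGammaRatio_pos one_half_pos) hR

theorem StrictAntiOn.existsUnique_eq_of_tendsto {f : ℝ → ℝ} {a b v c : ℝ} (hab : a < b)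
    (hf : StrictAntiOn f (Ioo a b)) (hcont : ContinuousOn f (Ioo a b))
    (ha : Tendsto f (𝓝[>] a) atTop) (hb : Tendsto f (𝓝[<] b) (𝓝 v)) (hc : v < c) :
    ∃! x ∈ Ioo a b, f x = c := by
  have hla : 𝓝[>] a ≤ 𝓟 (Ioo a b) := nhdsWithin_Ioo_eq_nhdsGT hab ▸ inf_le_right
  have hlb : 𝓝[<] b ≤ 𝓟 (Ioo a b) := nhdsWithin_Ioo_eq_nhdsLT hab ▸ inf_le_right
  obtain ⟨x, hx, hfx⟩ := isPreconnected_Ioo.intermediate_value_Ioi hlb hla hcont hb ha hc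
  exact ⟨x, ⟨hx, hfx⟩, fun y ⟨hy, hfy⟩ ↦ hf.injOn hy hx (hfy.trans hfx.symm)⟩

theorem existsUnique_tanScaledGammaRatio_eq {c : ℝ} (hc : 0 < c) :
    ∃! x ∈ Ioo (1 / 2 : ℝ) 1, tanScaledGammaRatio x = c :=
  strictAntiOn_tanScaledGammaRatio.existsUnique_eq_of_tendsto (by norm_num)
    continuousOn_tanScaledGammaRatio tendsto_tanScaledGammaRatio_one_half
    tendsto_tanScaledGammaRatio_one hc

theorem one_div_rpow_mul_sqrt_pi_mul_Gamma_div_Gamma {x : ℝ} (hx : x ∈ Ioo (1 / 2 : ℝ) 1) :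
    1 / ((4 : ℝ) ^ x * √π) * Gamma (1 / 2 - x) / Gamma (1 - x) = -tanScaledGammaRatio x / √π := by
  obtain ⟨hx₁, hx₂⟩ := hx
  have hsin : sin (π * x) ≠ 0 := (sin_pos_of_pos_of_lt_pi (by nlinarith [pi_pos])
    (by nlinarith [pi_pos])).ne'
  have hcos : cos (π * x) ≠ 0 := (cos_neg_of_pi_div_two_lt_of_lt (by nlinarith [pi_pos])
    (by nlinarith [pi_pos])).ne
  rw [mul_div_assoc, Gamma_one_half_sub_div_Gamma_one_sub hsin hcos, tanScaledGammaRatio,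
    scaledGammaRatio, show π * (1 - x) = π - π * x by ring, tan_pi_sub, rpow_neg four_pos.le]
  field_simp

theorem involutive_one_div_two_mul : Function.Involutive fun x : ℝ ↦ 1 / (2 * x) := fun x ↦ by
  field_simp

theorem one_div_two_mul_mem_Ioo_iff {x : ℝ} :
    1 / (2 * x) ∈ Ioo (1 / 2 : ℝ) 1 ↔ x ∈ Ioo (1 / 2 : ℝ) 1 := by
  have hmaps : ∀ y ∈ Ioo (1 / 2 : ℝ) 1, 1 / (2 * y) ∈ Ioo (1 / 2 : ℝ) 1 := fun y ⟨hy₁, hy₂⟩ ↦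
    ⟨by rw [lt_div_iff₀ (by linarith)]; linarith, by rw [div_lt_one (by linarith)]; linarith⟩
  exact ⟨fun h ↦ involutive_one_div_two_mul x ▸ hmaps _ h, hmaps x⟩

/-- For each `p ∈ (0,1)`, there is a unique `α ∈ (1/2, 1)` satisfying
`(1/(4^{1/(2α)}·√π)) · Γ(1/2 - 1/(2α)) / Γ(1 - 1/(2α)) = p/(p-1)`. -/
theorem exists_unique_exponent (p : ℝ) (hp : p ∈ Set.Ioo (0 : ℝ) 1) :
    ∃! α : ℝ, α ∈ Set.Ioo (1 / 2 : ℝ) 1 ∧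
      (1 / ((4 : ℝ) ^ (1 / (2 * α)) * Real.sqrt Real.pi))
          * Real.Gamma (1 / 2 - 1 / (2 * α)) / Real.Gamma (1 - 1 / (2 * α))
        = p / (p - 1) := by
  have hq : p / (p - 1) < 0 := div_neg_of_pos_of_neg hp.1 (sub_neg.2 hp.2)
  have hsqrt : 0 < √π := sqrt_pos.2 pi_pos
  refine ((involutive_one_div_two_mul.toPerm _).existsUnique_congr fun α ↦ ?_).2
    (existsUnique_tanScaledGammaRatio_eq (c := -(p / (p - 1) * √π)) (by nlinarith))
  rw [Function.Involutive.coe_toPerm, ← one_div_two_mul_mem_Ioo_iff]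
  refine and_congr_right fun hx ↦ ?_
  rw [one_div_rpow_mul_sqrt_pi_mul_Gamma_div_Gamma hx, div_eq_iff hsqrt.ne', neg_eq_iff_eq_neg]
end

section
/- Comparison lemma (upper direction): Let p ∈ (0,1), let (q(k))_{k≥1} be a sequence of positive reals satisfying the recursion q(k) = (1/(1 + ((1-p)/p)Q(k))) · ( ∑_{1 ≤ i < k/2} q(i)q(k-i) + ((1-p)/(2p))q(k)^2 + 1_{k even}·(1/2)q(k/2)^2 ) for all k ≥ 2, where Q(k) = ∑_{i ≥ k} q(i) ≤ 1. Let (q̂(k))_{k≥1} be a sequence of positive reals such that for all sufficiently large k, q̂(k) ≥ (1/(1 + ((1-p)/p)Q(k))) · ( ∑_{1 ≤ i < k/2} q(i)q̂(k-i) + ((1-p)/(2p))q(k)^2 + 1_{k even}·(1/2)q(k/2)^2 ). Then there exists C > 0 such that q(k) ≤ C·q̂(k) for all k ≥ 1. -/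
/-!
Beyond a finite initial segment, the recursion for `q` and the inequation for `q̂` share the
same nonnegative prefactor and source term, and their convolutions see `q` resp. `q̂` only at
indices `k - i < k`, with nonnegative weights `q i`. So a bound
`q ≤ C q̂` with `C ≥ 1` propagates by strong induction; `C` is chosen to cover the initial segment.
-/

open Finset

theorem exists_le_mul_of_step {u v : ℕ → ℝ} (K : ℕ) (hv : ∀ k, 1 ≤ k → 0 < v k)
    (hstep : ∀ C ≥ 1, ∀ k, K < k → (∀ j, 1 ≤ j → j < k → u j ≤ C * v j) → u k ≤ C * v k) :
    ∃ C > 0, ∀ k, 1 ≤ k → u k ≤ C * v k := by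
  obtain ⟨M, hM⟩ := ((Icc 1 K).image fun j => u j / v j).bddAbove
  have hC : 1 ≤ max 1 M := le_max_left _ _
  refine ⟨max 1 M, by positivity, fun k => ?_⟩
  induction k using Nat.strong_induction_on with
  | _ k IH =>
  intro hk
  rcases le_or_gt k K with hkK | hKk
  · have hratio : u k / v k ≤ M := hM (mem_image_of_mem _ (mem_Icc.mpr ⟨hk, hkK⟩))
    exact (div_le_iff₀ (hv k hk)).mp (hratio.trans (le_max_right _ _))
  · exact hstep _ hC k hKk fun j hj hjk => IH j hjk hj

theorem mul_sum_add_le_mul_mul {ι : Type*} (s : Finset ι) {a B C : ℝ} {w x y : ι → ℝ}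
    (ha : 0 ≤ a) (hB : 0 ≤ B) (hC : 1 ≤ C) (hw : ∀ i ∈ s, 0 ≤ w i)
    (hxy : ∀ i ∈ s, x i ≤ C * y i) :
    a * (∑ i ∈ s, w i * x i + B) ≤ C * (a * (∑ i ∈ s, w i * y i + B)) := by
  have hsum : ∑ i ∈ s, w i * x i ≤ C * ∑ i ∈ s, w i * y i := by
    rw [mul_sum]
    refine sum_le_sum fun i hi => ?_
    calc w i * x i ≤ w i * (C * y i) := mul_le_mul_of_nonneg_left (hxy i hi) (hw i hi)
      _ = C * (w i * y i) := by ring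
  have hB' : B ≤ C * B := le_mul_of_one_le_left hB hC
  calc a * (∑ i ∈ s, w i * x i + B) ≤ a * (C * ∑ i ∈ s, w i * y i + C * B) := by gcongr
    _ = C * (a * (∑ i ∈ s, w i * y i + B)) := by ring

theorem comparison_upper_general (p : ℝ) (hp : p ∈ Set.Ioo (0 : ℝ) 1)
    (q Q qhat : ℕ → ℝ)
    (hq : ∀ k, 1 ≤ k → 0 < q k)
    (hQ : ∀ k, Q k = ∑' i : ℕ, if k ≤ i then q i else 0)
    (hrec : ∀ k, 2 ≤ k → q k = (1 / (1 + ((1 - p) / p) * Q k)) *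
      (∑ i ∈ Finset.Icc 1 ((k - 1) / 2), q i * q (k - i)
        + ((1 - p) / (2 * p)) * (q k) ^ 2
        + (if Even k then (1 / 2) * (q (k / 2)) ^ 2 else 0)))
    (hqhat : ∀ k, 1 ≤ k → 0 < qhat k)
    (hineq : ∃ k₀ : ℕ, ∀ k, k₀ ≤ k → qhat k ≥ (1 / (1 + ((1 - p) / p) * Q k)) *
      (∑ i ∈ Finset.Icc 1 ((k - 1) / 2), q i * qhat (k - i)
        + ((1 - p) / (2 * p)) * (q k) ^ 2
        + (if Even k then (1 / 2) * (q (k / 2)) ^ 2 else 0))) :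
    ∃ C > 0, ∀ k, 1 ≤ k → q k ≤ C * qhat k := by
  obtain ⟨hp0, hp1⟩ := hp
  obtain ⟨k₀, hk₀⟩ := hineq
  refine exists_le_mul_of_step (max k₀ 2) hqhat fun C hC k hk IH => ?_
  have hQk : 0 ≤ Q k := hQ k ▸ tsum_nonneg fun i => by
    split_ifs with hki
    exacts [(hq i (by omega)).le, le_rfl]
  have hfactor : 0 ≤ 1 / (1 + (1 - p) / p * Q k) := by
    have : 0 ≤ (1 - p) / p * Q k := mul_nonneg (div_nonneg (by linarith) hp0.le) hQk
    positivity
  have hsource : 0 ≤ (1 - p) / (2 * p) * q k ^ 2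
      + (if Even k then 1 / 2 * q (k / 2) ^ 2 else 0) :=
    add_nonneg (mul_nonneg (div_nonneg (by linarith) (by linarith)) (sq_nonneg _))
      (by split_ifs <;> positivity)
  rw [hrec k (by omega), add_assoc]
  refine (mul_sum_add_le_mul_mul _ (y := fun i => qhat (k - i)) hfactor hsource hC
    (fun i hi => (hq i (mem_Icc.mp hi).1).le) fun i hi => ?_).trans ?_
  · have := mem_Icc.mp hi
    exact IH (k - i) (by omega) (by omega)
  · simpa only [add_assoc] using mul_le_mul_of_nonneg_left (hk₀ k (by omega)) (by linarith)

/-- Comparison lemma (upper direction): if `q̂` satisfies the inequation associated to the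
recursion for `q` (with `≥`) for all sufficiently large `k`, then `q(k) ≤ C·q̂(k)` for all
`k ≥ 1`, for some constant `C > 0`. -/
theorem comparison_upper (p : ℝ) (hp : p ∈ Set.Ioo (0 : ℝ) 1)
    (q Q qhat : ℕ → ℝ)
    (hq : ∀ k, 1 ≤ k → 0 < q k) (hsum : Summable q)
    (hQ : ∀ k, Q k = ∑' i : ℕ, if k ≤ i then q i else 0)
    (hQ1 : ∀ k, Q k ≤ 1)
    (hrec : ∀ k, 2 ≤ k → q k = (1 / (1 + ((1 - p) / p) * Q k)) *
      (∑ i ∈ Finset.Icc 1 ((k - 1) / 2), q i * q (k - i)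
        + ((1 - p) / (2 * p)) * (q k) ^ 2
        + (if Even k then (1 / 2) * (q (k / 2)) ^ 2 else 0)))
    (hqhat : ∀ k, 1 ≤ k → 0 < qhat k)
    (hineq : ∃ k₀ : ℕ, ∀ k, k₀ ≤ k → qhat k ≥ (1 / (1 + ((1 - p) / p) * Q k)) *
      (∑ i ∈ Finset.Icc 1 ((k - 1) / 2), q i * qhat (k - i)
        + ((1 - p) / (2 * p)) * (q k) ^ 2
        + (if Even k then (1 / 2) * (q (k / 2)) ^ 2 else 0))) :
    ∃ C > 0, ∀ k, 1 ≤ k → q k ≤ C * qhat k :=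
  comparison_upper_general p hp q Q qhat hq hQ hrec hqhat hineq
end

section
/- Comparison lemma (lower direction): With q, Q and p as in the previous statement, let (q̂(k))_{k≥1} be a sequence of positive reals such that for all sufficiently large k, q̂(k) ≤ (1/(1 + ((1-p)/p)Q(k))) · ∑_{1 ≤ i < k/2} q(i)q̂(k-i). Then there exists c > 0 such that c·q̂(k) ≤ q(k) for all k ≥ 1. -/
/-!
Choose `c` so small that `c q̂(k) ≤ q(k)` for the finitely many `k` below the threshold where the
inequation for `q̂` holds; then propagate by strong induction. Beyond the threshold, `c q̂` is a
subsolution and `q` a supersolution of the same monotone, positively homogeneous half-convolution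
recursion, because the two extra terms in the recursion for `q` are nonnegative. The normalising factor is
positive since it multiplies a nonnegative sum to give `q(k) > 0`.
-/

open Filter Topology

theorem exists_pos_forall_mul_le {ι : Type*} (s : Finset ι) {u v : ι → ℝ}
    (hu : ∀ k ∈ s, 0 < u k) : ∃ c > 0, ∀ k ∈ s, c * v k ≤ u k := by
  have hsmall : ∀ k ∈ s, ∀ᶠ c in 𝓝[>] (0 : ℝ), c * v k ≤ u k := fun k hk =>
    have hlim : Tendsto (fun c : ℝ => c * v k) (𝓝 0) (𝓝 0) :=
      (continuous_mul_const (v k)).tendsto' 0 0 (zero_mul _)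
    nhdsWithin_le_nhds (hlim.eventually (ge_mem_nhds (hu k hk)))
  obtain ⟨c, hcs, hc⟩ := (((eventually_all_finset s).2 hsmall).and self_mem_nhdsWithin).exists
  exact ⟨c, hc, hcs⟩

theorem pos_and_mul_le_of_eq_mul_add {w s e x : ℝ} (hx : 0 < x) (h : x = w * (s + e))
    (hs : 0 ≤ s) (he : 0 ≤ e) : 0 < w ∧ w * s ≤ x := by
  have hw : 0 < w := pos_of_mul_pos_left (h ▸ hx) (add_nonneg hs he)
  exact ⟨hw, h ▸ mul_le_mul_of_nonneg_left (le_add_of_nonneg_right he) hw.le⟩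

/-- `∑_{1 ≤ i < k/2} q(i) f(k-i)`; `(k - 1) / 2` is the largest `i < k/2`. -/
def halfConv (q f : ℕ → ℝ) (k : ℕ) : ℝ :=
  ∑ i ∈ Finset.Icc 1 ((k - 1) / 2), q i * f (k - i)

namespace halfConv

variable {q : ℕ → ℝ}

theorem nonneg {f : ℕ → ℝ} (hq : ∀ i, 1 ≤ i → 0 ≤ q i) (hf : ∀ j, 1 ≤ j → 0 ≤ f j) (k : ℕ) :
    0 ≤ halfConv q f k :=
  Finset.sum_nonneg fun i hi => by
    rw [Finset.mem_Icc] at hi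
    exact mul_nonneg (hq i hi.1) (hf (k - i) (by omega))

theorem mono {f g : ℕ → ℝ} {k : ℕ} (hq : ∀ i, 1 ≤ i → 0 ≤ q i)
    (hfg : ∀ j, 1 ≤ j → j < k → f j ≤ g j) : halfConv q f k ≤ halfConv q g k :=
  Finset.sum_le_sum fun i hi => by
    rw [Finset.mem_Icc] at hi
    exact mul_le_mul_of_nonneg_left (hfg (k - i) (by omega) (by omega)) (hq i hi.1)

theorem const_mul (c : ℝ) (f : ℕ → ℝ) (k : ℕ) :
    halfConv q (fun j => c * f j) k = c * halfConv q f k := by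
  simp only [halfConv, Finset.mul_sum, mul_left_comm]

end halfConv

theorem exists_pos_mul_le_of_halfConv {q u v w : ℕ → ℝ} (K : ℕ)
    (hq : ∀ i, 1 ≤ i → 0 ≤ q i) (hu : ∀ k, 1 ≤ k → 0 < u k)
    (hw : ∀ k, K ≤ k → 0 ≤ w k)
    (hu_super : ∀ k, K ≤ k → w k * halfConv q u k ≤ u k)
    (hv_sub : ∀ k, K ≤ k → v k ≤ w k * halfConv q v k) :
    ∃ c > 0, ∀ k, 1 ≤ k → c * v k ≤ u k := by
  obtain ⟨c, hc, hinit⟩ := exists_pos_forall_mul_le (Finset.Ico 1 K) (v := v)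
    fun k hk => hu k (Finset.mem_Ico.1 hk).1
  refine ⟨c, hc, fun k => ?_⟩
  induction k using Nat.strong_induction_on with
  | _ k ih =>
    intro hk
    rcases lt_or_ge k K with hkK | hkK
    · exact hinit k (Finset.mem_Ico.2 ⟨hk, hkK⟩)
    calc c * v k ≤ c * (w k * halfConv q v k) := mul_le_mul_of_nonneg_left (hv_sub k hkK) hc.le
      _ = w k * halfConv q (fun j => c * v j) k := by rw [halfConv.const_mul]; ring
      _ ≤ w k * halfConv q u k :=
        mul_le_mul_of_nonneg_left (halfConv.mono hq fun j hj hjk => ih j hjk hj) (hw k hkK)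
      _ ≤ u k := hu_super k hkK

theorem comparison_lower_general (p : ℝ) (hp : p ∈ Set.Ioo (0 : ℝ) 1)
    (q Q qhat : ℕ → ℝ)
    (hq : ∀ k, 1 ≤ k → 0 < q k)
    (hrec : ∀ k, 2 ≤ k → q k = (1 / (1 + ((1 - p) / p) * Q k)) *
      (∑ i ∈ Finset.Icc 1 ((k - 1) / 2), q i * q (k - i)
        + ((1 - p) / (2 * p)) * (q k) ^ 2
        + (if Even k then (1 / 2) * (q (k / 2)) ^ 2 else 0)))
    (hineq : ∃ k₀ : ℕ, ∀ k, k₀ ≤ k → qhat k ≤ (1 / (1 + ((1 - p) / p) * Q k)) *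
      (∑ i ∈ Finset.Icc 1 ((k - 1) / 2), q i * qhat (k - i))) :
    ∃ c > 0, ∀ k, 1 ≤ k → c * qhat k ≤ q k := by
  obtain ⟨k₀, hk₀⟩ := hineq
  have hq0 : ∀ i, 1 ≤ i → 0 ≤ q i := fun i hi => (hq i hi).le
  have hsuper : ∀ k, 2 ≤ k → 0 < 1 / (1 + ((1 - p) / p) * Q k) ∧
      1 / (1 + ((1 - p) / p) * Q k) * halfConv q q k ≤ q k := fun k hk => by
    have hrec' := hrec k hk
    rw [add_assoc] at hrec'
    refine pos_and_mul_le_of_eq_mul_add (hq k (by omega)) hrec' (halfConv.nonneg hq0 hq0 k) ?_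
    have hcoef : 0 ≤ (1 - p) / (2 * p) := div_nonneg (by linarith [hp.2]) (by linarith [hp.1])
    exact add_nonneg (by positivity) (by split_ifs <;> positivity)
  exact exists_pos_mul_le_of_halfConv (max k₀ 2) hq0 hq
    (fun k hk => (hsuper k (le_of_max_le_right hk)).1.le)
    (fun k hk => (hsuper k (le_of_max_le_right hk)).2)
    (fun k hk => hk₀ k (le_of_max_le_left hk))

/-- Comparison lemma (lower direction): if `q̂` satisfies the inequation associated to the
recursion for `q` (with `≤`, dropping the nonnegative extra terms) for all sufficiently
large `k`, then `c·q̂(k) ≤ q(k)` for all `k ≥ 1`, for some constant `c > 0`. -/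
theorem comparison_lower (p : ℝ) (hp : p ∈ Set.Ioo (0 : ℝ) 1)
    (q Q qhat : ℕ → ℝ)
    (hq : ∀ k, 1 ≤ k → 0 < q k) (hsum : Summable q)
    (hQ : ∀ k, Q k = ∑' i : ℕ, if k ≤ i then q i else 0)
    (hQ1 : ∀ k, Q k ≤ 1)
    (hrec : ∀ k, 2 ≤ k → q k = (1 / (1 + ((1 - p) / p) * Q k)) *
      (∑ i ∈ Finset.Icc 1 ((k - 1) / 2), q i * q (k - i)
        + ((1 - p) / (2 * p)) * (q k) ^ 2
        + (if Even k then (1 / 2) * (q (k / 2)) ^ 2 else 0)))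
    (hqhat : ∀ k, 1 ≤ k → 0 < qhat k)
    (hineq : ∃ k₀ : ℕ, ∀ k, k₀ ≤ k → qhat k ≤ (1 / (1 + ((1 - p) / p) * Q k)) *
      (∑ i ∈ Finset.Icc 1 ((k - 1) / 2), q i * qhat (k - i))) :
    ∃ c > 0, ∀ k, 1 ≤ k → c * qhat k ≤ q k :=
  comparison_lower_general p hp q Q qhat hq hrec hineq
end

section
/- Tail bound for geometric-type comparison: Fix p ∈ (0,1) and integers k ≥ 2, and let (τ_j) be random variables such that conditionally on τ_k, P(τ_{k+1} > τ_k + j | τ_k) ≤ ∏_{i=0}^{j-1}(1 - p(k-1)/(τ_k+i)) for all j ≥ 0 (with the empty product equal to 1), where τ_k ≥ k almost surely. Then almost surely P(τ_{k+1} > τ_k + j | τ_k) ≤ (1 + j/τ_k)^{-p(k-1)}, and if p(k-1) > 1 then E[τ_{k+1} - τ_k | τ_k] ≤ (1 + O(1/k))·τ_k/(pk) + 1, with deterministic implied constant. -/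
/-!
Each factor of the product satisfies `1 - x ≤ exp (-x)`, and the harmonic sum `∑ i < j, 1 / (τ + i)` dominates
`log (1 + j / τ)`, which gives the power-law tail. For the expectation, the tangent-line
inequality for `t ↦ t ^ (-(a - 1))` bounds each tail term by a telescoping difference, so the sum
of the tails is at most `1 + τ / (a - 1)`. The constant is uniform in `k` because `p (k - 1) - 1`,
once positive, is bounded below by a constant depending only on `p`, as `k` is an integer.
-/

open Finset Real

theorem log_one_add_div_le_sum_inv {τ : ℝ} (hτ : 0 < τ) (j : ℕ) :
    log (1 + j / τ) ≤ ∑ i ∈ range j, (τ + i)⁻¹ := by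
  induction j with
  | zero => simp
  | succ j ih =>
    have hj : 0 < τ + j := by positivity
    have hstep : log (1 + (j + 1 : ℕ) / τ) = log (1 + j / τ) + log (1 + (τ + j)⁻¹) := by
      rw [← log_mul (by positivity) (by positivity)]
      congr 1
      field_simp
      push_cast
      ring
    have hlog : log (1 + (τ + j)⁻¹) ≤ (τ + j)⁻¹ := by
      linarith [log_le_sub_one_of_pos (show 0 < 1 + (τ + j)⁻¹ by positivity)]
    rw [hstep, sum_range_succ]
    linarith

theorem prod_one_sub_div_le_exp {a τ : ℝ} (ha : 0 ≤ a) (haτ : a ≤ τ) (j : ℕ) :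
    ∏ i ∈ range j, (1 - a / (τ + i)) ≤ exp (-(a * ∑ i ∈ range j, (τ + i)⁻¹)) := by
  rw [mul_sum, ← sum_neg_distrib, exp_sum]
  refine prod_le_prod (fun i _ => ?_) (fun i _ => ?_)
  · rw [sub_nonneg]
    exact div_le_one_of_le₀ (by linarith [Nat.cast_nonneg (α := ℝ) i]) (by linarith)
  · linarith [add_one_le_exp (-(a * (τ + i)⁻¹)), div_eq_mul_inv a (τ + i)]

theorem prod_one_sub_div_le_rpow {a τ : ℝ} (ha : 0 ≤ a) (haτ : a ≤ τ) (hτ : 0 < τ) (j : ℕ) :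
    ∏ i ∈ range j, (1 - a / (τ + i)) ≤ (1 + j / τ) ^ (-a) := by
  calc ∏ i ∈ range j, (1 - a / (τ + i)) ≤ exp (-(a * ∑ i ∈ range j, (τ + i)⁻¹)) :=
        prod_one_sub_div_le_exp ha haτ j
    _ ≤ exp (log (1 + j / τ) * -a) := by
        gcongr
        nlinarith [log_one_add_div_le_sum_inv hτ j]
    _ = (1 + j / τ) ^ (-a) := (rpow_def_of_pos (by positivity) _).symm

theorem one_add_mul_one_sub_le_rpow_neg {t b : ℝ} (ht : 0 < t) (hb : 0 ≤ b) :
    1 + b * (1 - t) ≤ t ^ (-b) := by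
  rw [rpow_def_of_pos ht]
  nlinarith [add_one_le_exp (log t * -b), log_le_sub_one_of_pos ht]

/-- Tangent-line inequality at `x` for the convex function `t ↦ t ^ (-b)`. -/
theorem mul_sub_mul_rpow_le_rpow_neg_sub {x y b : ℝ} (hx : 0 < x) (hy : 0 < y) (hb : 0 ≤ b) :
    b * (x - y) * x ^ (-(b + 1)) ≤ y ^ (-b) - x ^ (-b) := by
  have hxb : 0 < x ^ (-b) := rpow_pos_of_pos hx _
  have hsplit : y ^ (-b) = x ^ (-b) * (y / x) ^ (-b) := by
    rw [div_rpow hy.le hx.le, mul_div_cancel₀ _ hxb.ne']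
  have hpow : x ^ (-(b + 1)) = x ^ (-b) / x := by
    rw [neg_add, rpow_add hx, rpow_neg_one, div_eq_mul_inv]
  have hbern := mul_le_mul_of_nonneg_left (one_add_mul_one_sub_le_rpow_neg (div_pos hy hx) hb) hxb.le
  rw [hsplit, hpow]
  calc b * (x - y) * (x ^ (-b) / x) = x ^ (-b) * (1 + b * (1 - y / x)) - x ^ (-b) := by
        field_simp; ring
    _ ≤ _ := by linarith

theorem tsum_le_of_le_sub_succ {f h : ℕ → ℝ} (hf : ∀ n, 0 ≤ f n) (hh : ∀ n, 0 ≤ h n)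
    (hfh : ∀ n, f n ≤ h n - h (n + 1)) : Summable f ∧ ∑' n, f n ≤ h 0 := by
  have hpartial : ∀ n, ∑ i ∈ range n, f i ≤ h 0 := fun n =>
    calc ∑ i ∈ range n, f i ≤ ∑ i ∈ range n, (h i - h (i + 1)) := sum_le_sum fun i _ => hfh i
      _ = h 0 - h n := sum_range_sub' h n
      _ ≤ h 0 := sub_le_self _ (hh n)
  have hs := summable_of_sum_range_le hf hpartial
  exact ⟨hs, hs.tsum_le_of_sum_range_le hpartial⟩

theorem tsum_le_one_add_div_of_le_rpow_neg {g : ℕ → ℝ} {a τ : ℝ} (hg0 : ∀ j, 0 ≤ g j)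
    (hg : ∀ j : ℕ, g j ≤ (1 + j / τ) ^ (-a)) (ha : 1 < a) (hτ : 0 < τ) :
    ∑' j, g j ≤ 1 + τ / (a - 1) := by
  set b := a - 1
  have hb0 : 0 < b := by linarith
  have hstep : ∀ j : ℕ, g (j + 1) ≤
      τ / b * (1 + j / τ) ^ (-b) - τ / b * (1 + (j + 1 : ℕ) / τ) ^ (-b) := by
    intro j
    have hxy : (1 + (j + 1 : ℕ) / τ) - (1 + j / τ) = 1 / τ := by push_cast; ring
    have key := mul_sub_mul_rpow_le_rpow_neg_sub (x := 1 + (j + 1 : ℕ) / τ) (y := 1 + j / τ)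
      (by positivity) (by positivity) hb0.le
    rw [hxy, show -(b + 1) = -a by ring] at key
    calc g (j + 1) ≤ (1 + (j + 1 : ℕ) / τ) ^ (-a) := hg (j + 1)
      _ = τ / b * (b * (1 / τ) * (1 + (j + 1 : ℕ) / τ) ^ (-a)) := by field_simp
      _ ≤ _ := by rw [← mul_sub]; gcongr
  obtain ⟨hs, hle⟩ := tsum_le_of_le_sub_succ (fun j => hg0 (j + 1)) (fun j => by positivity) hstep
  rw [((summable_nat_add_iff 1).mp hs).tsum_eq_zero_add]
  have h0 : g 0 ≤ 1 := by simpa using hg 0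
  simp only [CharP.cast_eq_zero, zero_div, add_zero, one_rpow, mul_one] at hle
  linarith

theorem exists_pos_le_mul_natCast_sub_one {p : ℝ} (hp : 0 < p) :
    ∃ δ > 0, ∀ n : ℕ, 1 < p * n → δ ≤ p * n - 1 := by
  refine ⟨p * (⌊1 / p⌋₊ + 1) - 1, ?_, fun n hn => ?_⟩
  · have := Nat.lt_floor_add_one (1 / p)
    rw [div_lt_iff₀ hp] at this
    linarith
  · have hfloor : ⌊1 / p⌋₊ < n := Nat.floor_lt (by positivity) |>.mpr (by rwa [div_lt_iff₀' hp])
    have : (⌊1 / p⌋₊ : ℝ) + 1 ≤ n := by exact_mod_cast hfloor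
    nlinarith

theorem div_le_one_add_div_mul_div {p δ k τ : ℝ} (hp : 0 < p) (hδ : 0 < δ) (hτ : 0 ≤ τ)
    (hk : 0 < k) (hδk : δ ≤ p * (k - 1) - 1) :
    τ / (p * (k - 1) - 1) ≤ (1 + (p + 1) / p * (1 + (p + 1) / δ) / k) * τ / (p * k) := by
  set b := p * (k - 1) - 1 with hb
  have hb0 : 0 < b := by linarith
  set C := (p + 1) / p * (1 + (p + 1) / δ)
  have hCb : p + 1 ≤ C * b / k := by
    rw [le_div_iff₀ hk]
    calc (p + 1) * k = (p + 1) / p * (b + (p + 1)) := by rw [hb]; field_simp; ring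
      _ ≤ (p + 1) / p * (b + (p + 1) / δ * b) := by
          gcongr
          rw [div_mul_eq_mul_div, le_div_iff₀ hδ]
          gcongr
      _ = C * b := by ring
  rw [div_le_div_iff₀ hb0 (by positivity)]
  calc τ * (p * k) = τ * (b + (p + 1)) := by rw [hb]; ring
    _ ≤ τ * (b + C * b / k) := by gcongr
    _ = (1 + C / k) * τ * b := by ring

/-- Tail bound for geometric-type comparison: if conditionally on `τ_k = τ` (with `τ ≥ k`),
the tail probabilities `g j` of `τ_{k+1} - τ_k` satisfy
`g j ≤ ∏_{i=0}^{j-1}(1 - p(k-1)/(τ+i))`, then `g j ≤ (1 + j/τ)^{-p(k-1)}`, and if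
`p(k-1) > 1` then the conditional expectation `∑_{j≥0} g j` is at most
`(1 + C/k)·τ/(pk) + 1` for a deterministic constant `C`. -/
theorem geometric_tail_bound (p : ℝ) (hp : p ∈ Set.Ioo (0 : ℝ) 1) :
    ∃ C > 0, ∀ k : ℕ, 2 ≤ k → ∀ τ : ℝ, (k : ℝ) ≤ τ →
      ∀ g : ℕ → ℝ, (∀ j, 0 ≤ g j) →
      (∀ j : ℕ, g j ≤ ∏ i ∈ Finset.range j, (1 - p * ((k : ℝ) - 1) / (τ + i))) →
      (∀ j : ℕ, g j ≤ (1 + (j : ℝ) / τ) ^ (-(p * ((k : ℝ) - 1)))) ∧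
      (1 < p * ((k : ℝ) - 1) →
        ∑' j : ℕ, g j ≤ (1 + C / k) * τ / (p * k) + 1) := by
  obtain ⟨hp0, hp1⟩ := hp
  obtain ⟨δ, hδ, hδle⟩ := exists_pos_le_mul_natCast_sub_one hp0
  refine ⟨(p + 1) / p * (1 + (p + 1) / δ), by positivity, fun k hk τ hkτ g hg0 hg => ?_⟩
  have hk' : (2 : ℝ) ≤ k := by exact_mod_cast hk
  have htail : ∀ j : ℕ, g j ≤ (1 + (j : ℝ) / τ) ^ (-(p * ((k : ℝ) - 1))) := fun j =>
    (hg j).trans (prod_one_sub_div_le_rpow (by nlinarith) (by nlinarith) (by linarith) j)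
  refine ⟨htail, fun ha => ?_⟩
  have hδk : δ ≤ p * ((k : ℝ) - 1) - 1 := by
    simpa [Nat.cast_pred (by omega : 0 < k)] using hδle (k - 1) (by rwa [Nat.cast_pred (by omega)])
  calc ∑' j, g j ≤ 1 + τ / (p * ((k : ℝ) - 1) - 1) :=
        tsum_le_one_add_div_of_le_rpow_neg hg0 htail ha (by linarith)
    _ ≤ _ := by linarith [div_le_one_add_div_mul_div hp0 hδ (by linarith) (by linarith) hδk]
end

section
/- Good scales exist: Suppose Q: ℕ → (0,1] is nonincreasing with Q(i) = i^{-ρ + o(1)} as i → ∞ for some ρ ∈ (0, 1). Then there exists a constant c > 0 such that ℓ·Q(ℓ) ≥ c·∑_{i=1}^{ℓ-1} Q(i) holds for infinitely many integers ℓ. -/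
/-!
If the inequality failed for all large `ℓ`, the partial sums
`S ℓ = ∑_{1 ≤ i < ℓ} Q i` would satisfy `S (ℓ + 1) ≤ (1 + c / ℓ) S ℓ`, hence grow at most like
`ℓ ^ c`. Monotonicity and the asymptotics of `Q` give `S (ℓ + 1) ≥ ℓ Q ℓ ≥ ℓ ^ (1 - ρ - c)`,
which is incompatible for `c = (1 - ρ) / 3`.
-/

open Filter Finset

theorem eventually_rpow_le_of_tendsto_log_div_log {f : ℕ → ℝ} {a b : ℝ} (hf : ∀ n, 0 < f n)
    (h : Tendsto (fun n : ℕ => Real.log (f n) / Real.log n) atTop (nhds a)) (hb : b < a) :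
    ∀ᶠ n : ℕ in atTop, (n : ℝ) ^ b ≤ f n := by
  filter_upwards [h.eventually (eventually_gt_nhds hb), eventually_ge_atTop 2] with n hn h2
  have hlog : 0 < Real.log n := Real.log_pos (by exact_mod_cast h2)
  rw [← Real.exp_log (hf n), Real.rpow_def_of_pos (by positivity)]
  exact Real.exp_le_exp.mpr (by nlinarith [(lt_div_iff₀ hlog).mp hn])

theorem le_mul_exp_sum_inv_of_succ_le {S : ℕ → ℝ} {c : ℝ} {N : ℕ} (hc : 0 ≤ c) (hSN : 0 ≤ S N)
    (hS : ∀ n ≥ N, S (n + 1) ≤ (1 + c / n) * S n) :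
    ∀ n ≥ N, S n ≤ S N * Real.exp (c * ∑ i ∈ Ico N n, (i : ℝ)⁻¹) := by
  intro n hn
  induction n, hn using Nat.le_induction with
  | base => simp
  | succ n hn ih =>
    have hB : 0 ≤ S N * Real.exp (c * ∑ i ∈ Ico N n, (i : ℝ)⁻¹) := by positivity
    calc S (n + 1) ≤ (1 + c / n) * S n := hS n hn
      _ ≤ (1 + c / n) * (S N * Real.exp (c * ∑ i ∈ Ico N n, (i : ℝ)⁻¹)) := by gcongr
      _ ≤ Real.exp (c / n) * (S N * Real.exp (c * ∑ i ∈ Ico N n, (i : ℝ)⁻¹)) := by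
        gcongr
        linarith [Real.add_one_le_exp (c / n)]
      _ = S N * Real.exp (c * ∑ i ∈ Ico N (n + 1), (i : ℝ)⁻¹) := by
        rw [sum_Ico_succ_top hn, mul_add, Real.exp_add, div_eq_mul_inv]
        ring

theorem sum_Ico_inv_le_one_add_log {N : ℕ} (hN : 1 ≤ N) (n : ℕ) :
    ∑ i ∈ Ico N n, (i : ℝ)⁻¹ ≤ 1 + Real.log n :=
  calc ∑ i ∈ Ico N n, (i : ℝ)⁻¹ ≤ ∑ i ∈ Icc 1 n, (i : ℝ)⁻¹ := by
        refine sum_le_sum_of_subset_of_nonneg (fun i hi => ?_) fun i _ _ => by positivity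
        simp only [mem_Ico, mem_Icc] at hi ⊢
        omega
    _ = harmonic n := by simp [harmonic_eq_sum_Icc]
    _ ≤ 1 + Real.log n := harmonic_le_one_add_log n

theorem le_mul_rpow_of_succ_le {S : ℕ → ℝ} {c : ℝ} {N : ℕ} (hc : 0 ≤ c) (hN : 1 ≤ N)
    (hSN : 0 ≤ S N) (hS : ∀ n ≥ N, S (n + 1) ≤ (1 + c / n) * S n) :
    ∀ n ≥ N, S n ≤ S N * Real.exp c * (n : ℝ) ^ c := by
  intro n hn
  have hn0 : (0 : ℝ) < n := by exact_mod_cast (hN.trans hn)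
  calc S n ≤ S N * Real.exp (c * ∑ i ∈ Ico N n, (i : ℝ)⁻¹) :=
        le_mul_exp_sum_inv_of_succ_le hc hSN hS n hn
    _ ≤ S N * Real.exp (c * (1 + Real.log n)) := by
        gcongr
        exact sum_Ico_inv_le_one_add_log hN n
    _ = S N * Real.exp c * (n : ℝ) ^ c := by
        rw [Real.rpow_def_of_pos hn0, mul_add, mul_one, Real.exp_add, mul_comm c, mul_assoc]

theorem exists_sum_Icc_le_mul_rpow_of_eventually_lt {Q : ℕ → ℝ} {c : ℝ} (hQ : ∀ i, 0 ≤ Q i)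
    (hc : 0 ≤ c)
    (h : ∀ᶠ ℓ : ℕ in atTop, (ℓ : ℝ) * Q ℓ < c * ∑ i ∈ Icc 1 (ℓ - 1), Q i) :
    ∃ C, ∀ᶠ n : ℕ in atTop, ∑ i ∈ Icc 1 n, Q i ≤ C * (n : ℝ) ^ c := by
  set S : ℕ → ℝ := fun ℓ => ∑ i ∈ Icc 1 (ℓ - 1), Q i
  obtain ⟨N, hN⟩ := (h.and (eventually_ge_atTop 1)).exists_forall_of_atTop
  have hS0 : ∀ n, 0 ≤ S n := fun n => sum_nonneg fun i _ => hQ i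
  have hstep : ∀ n ≥ N, S (n + 1) ≤ (1 + c / n) * S n := by
    intro n hn
    obtain ⟨hlt, hn1⟩ := hN n hn
    have hn0 : (0 : ℝ) < n := by exact_mod_cast hn1
    have hsucc : S (n + 1) = S n + Q n := by
      obtain ⟨m, rfl⟩ := Nat.exists_eq_add_of_le' hn1
      simp only [S, Nat.add_sub_cancel]
      exact sum_Icc_succ_top (by omega) Q
    have hQn : Q n ≤ c / n * S n := by
      rw [div_mul_eq_mul_div, le_div_iff₀ hn0]
      linarith
    linarith
  have hN1 : 1 ≤ N := (hN N le_rfl).2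
  refine ⟨(1 + c) * (S N * Real.exp c), eventually_atTop.mpr ⟨N, fun n hn => ?_⟩⟩
  have hn1 : (1 : ℝ) ≤ n := by exact_mod_cast hN1.trans hn
  have hcn : c / n ≤ c := div_le_self hc hn1
  calc ∑ i ∈ Icc 1 n, Q i = S (n + 1) := by simp [S]
    _ ≤ (1 + c / n) * S n := hstep n hn
    _ ≤ (1 + c) * (S N * Real.exp c * (n : ℝ) ^ c) := by
        gcongr
        · exact hS0 n
        · exact le_mul_rpow_of_succ_le hc hN1 (hS0 N) hstep n hn
    _ = (1 + c) * (S N * Real.exp c) * (n : ℝ) ^ c := by ring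

theorem nat_mul_le_sum_Icc_of_antitone {Q : ℕ → ℝ} (hQ : Antitone Q) (n : ℕ) :
    n * Q n ≤ ∑ i ∈ Icc 1 n, Q i := by
  have := card_nsmul_le_sum (Icc 1 n) Q (Q n) fun i hi => hQ (mem_Icc.mp hi).2
  simpa using this

theorem not_eventually_rpow_le_mul_rpow {a b : ℝ} (hab : b < a) (C : ℝ) :
    ¬ ∀ᶠ n : ℕ in atTop, (n : ℝ) ^ a ≤ C * (n : ℝ) ^ b := by
  intro h
  have hgrow : Tendsto (fun n : ℕ => (n : ℝ) ^ (a - b)) atTop atTop :=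
    (tendsto_rpow_atTop (sub_pos.mpr hab)).comp tendsto_natCast_atTop_atTop
  obtain ⟨n, hn, hbig, hn1⟩ :=
    (h.and ((hgrow.eventually_gt_atTop C).and (eventually_ge_atTop 1))).exists
  have hn0 : (0 : ℝ) < n := by exact_mod_cast hn1
  have hsplit : (n : ℝ) ^ a = (n : ℝ) ^ (a - b) * (n : ℝ) ^ b := by
    rw [← Real.rpow_add hn0, sub_add_cancel]
  have : C * (n : ℝ) ^ b < (n : ℝ) ^ (a - b) * (n : ℝ) ^ b := by gcongr
  linarith

theorem good_scales_exist_general (ρ : ℝ) (hρ : ρ ∈ Set.Ioo (0 : ℝ) 1)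
    (Q : ℕ → ℝ) (hpos : ∀ i, 0 < Q i)
    (hmono : ∀ i, Q (i + 1) ≤ Q i)
    (hasymp : Tendsto (fun i : ℕ => Real.log (Q i) / Real.log i) atTop (nhds (-ρ))) :
    ∃ c > 0, {ℓ : ℕ | c * ∑ i ∈ Finset.Icc 1 (ℓ - 1), Q i ≤ (ℓ : ℝ) * Q ℓ}.Infinite := by
  set c := (1 - ρ) / 3 with hc
  have hc0 : 0 < c := by linarith [hρ.2]
  refine ⟨c, hc0, fun hfin => ?_⟩
  have hbad : ∀ᶠ ℓ : ℕ in atTop, (ℓ : ℝ) * Q ℓ < c * ∑ i ∈ Icc 1 (ℓ - 1), Q i := by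
    rw [← Nat.cofinite_eq_atTop]
    filter_upwards [hfin.eventually_cofinite_notMem] with ℓ hℓ
    exact not_le.mp hℓ
  obtain ⟨C, hC⟩ := exists_sum_Icc_le_mul_rpow_of_eventually_lt (fun i => (hpos i).le) hc0.le hbad
  have hQ := eventually_rpow_le_of_tendsto_log_div_log hpos hasymp (show -(ρ + c) < -ρ by linarith)
  refine not_eventually_rpow_le_mul_rpow (show c < 2 * c by linarith) C ?_
  filter_upwards [hQ, hC] with n hQn hCn
  calc (n : ℝ) ^ (2 * c) = n * (n : ℝ) ^ (-(ρ + c)) := by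
        rw [← Real.rpow_one_add' n.cast_nonneg (by linarith)]
        congr 1
        linarith
    _ ≤ n * Q n := by gcongr
    _ ≤ ∑ i ∈ Icc 1 n, Q i := nat_mul_le_sum_Icc_of_antitone (antitone_nat_of_succ_le hmono) n
    _ ≤ C * (n : ℝ) ^ c := hCn

/-- Good scales exist: if `Q : ℕ → (0,1]` is nonincreasing with `Q(i) = i^{-ρ+o(1)}`
for some `ρ ∈ (0,1)` (i.e. `log Q(i)/log i → -ρ`), then there is a constant `c > 0` such
that `ℓ·Q(ℓ) ≥ c·∑_{i=1}^{ℓ-1} Q(i)` for infinitely many integers `ℓ`. -/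
theorem good_scales_exist (ρ : ℝ) (hρ : ρ ∈ Set.Ioo (0 : ℝ) 1)
    (Q : ℕ → ℝ) (hpos : ∀ i, 0 < Q i) (hle1 : ∀ i, Q i ≤ 1)
    (hmono : ∀ i, Q (i + 1) ≤ Q i)
    (hasymp : Tendsto (fun i : ℕ => Real.log (Q i) / Real.log i) atTop (nhds (-ρ))) :
    ∃ c > 0, {ℓ : ℕ | c * ∑ i ∈ Finset.Icc 1 (ℓ - 1), Q i ≤ (ℓ : ℝ) * Q ℓ}.Infinite :=
  good_scales_exist_general ρ hρ Q hpos hmono hasymp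
end
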